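/- Let U ⊆ ℂⁿ be open and ρ : ℂⁿ → ℝ twice continuously differentiable on U with ‖∇ρ(z)‖ = 1 for all z ∈ U, where ∇ρ is the gradient with respect to the real inner product Re⟪·,·⟫ on ℂⁿ. Let z₀ ∈ U and w ∈ ℂⁿ satisfy Re⟪w, ∇ρ(z₀)⟫ = 0 and Re⟪i·w, ∇ρ(z₀)⟫ = 0 (i.e. w lies in the complex tangent space at z₀ of the level set of ρ through z₀). Then for every t ∈ ℝ such that z₀ + s·∇ρ(z₀) ∈ U for all s between 0 and t, one has Re⟪w, ∇ρ(z₀ + t·∇ρ(z₀))⟫ = 0 and Re⟪i·w, ∇ρ(z₀ + t·∇ρ(z₀))⟫ = 0; that is, w lies in the complex tangent space at z₀ + t·∇ρ(z₀) of the level set of ρ through that point. -/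

import Mathlib

/-!
Differentiating `‖∇ρ‖² ≡ 1` gives `⟪D∇ρ(z) a, ∇ρ(z)⟫ = 0` for all `a`, and since `D∇ρ(z)` is the
Hessian, which is symmetric, this says `D∇ρ(z) ∇ρ(z) = 0`. Along the normal line
`γ(s) = z₀ + s ∇ρ(z₀)`, the difference `f(s) = ∇ρ(γ(s)) - ∇ρ(z₀)` therefore satisfies
`f' = D∇ρ(γ) ∇ρ(z₀) = -D∇ρ(γ) f`, and Grönwall's inequality forces `f ≡ 0`. So the gradient, and
with it the complex tangent space, does not change along the normal line.
-/

open Set Filter Topology InnerProductSpace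

section Gradient

variable {E : Type*} [NormedAddCommGroup E] [InnerProductSpace ℝ E] [CompleteSpace E]

lemma inner_fderiv_gradient_apply (ρ : E → ℝ) (z a b : E) :
    inner ℝ (fderiv ℝ (gradient ρ) z a) b = fderiv ℝ (fderiv ℝ ρ) z a b := by
  have : gradient ρ = (toDual ℝ E).symm ∘ fderiv ℝ ρ := rfl
  rw [this, LinearIsometryEquiv.comp_fderiv]
  exact toDual_symm_apply

lemma ContDiffAt.isSymmetric_fderiv_gradient {ρ : E → ℝ} {z : E} (hρ : ContDiffAt ℝ 2 ρ z) :
    (fderiv ℝ (gradient ρ) z : E →ₗ[ℝ] E).IsSymmetric := by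
  intro a b
  have hsymm := hρ.isSymmSndFDerivAt (by simp [minSmoothness_of_isRCLikeNormedField])
  simp only [ContinuousLinearMap.coe_coe]
  rw [inner_fderiv_gradient_apply, real_inner_comm, inner_fderiv_gradient_apply, hsymm.eq]

lemma ContDiffAt.differentiableAt_gradient {ρ : E → ℝ} {z : E} (hρ : ContDiffAt ℝ 2 ρ z) :
    DifferentiableAt ℝ (gradient ρ) z :=
  (toDual ℝ E).symm.differentiableAt.comp z
    ((hρ.fderiv_right (m := 1) le_rfl).differentiableAt one_ne_zero)

lemma ContDiffOn.gradient_of_isOpen {ρ : E → ℝ} {U : Set E} {n : WithTop ℕ∞}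
    (hρ : ContDiffOn ℝ (n + 1) ρ U) (hU : IsOpen U) : ContDiffOn ℝ n (gradient ρ) U :=
  (toDual ℝ E).symm.contDiff.comp_contDiffOn (hρ.fderiv_of_isOpen hU le_rfl)

end Gradient

lemma inner_fderiv_apply_self_eq_zero {E F : Type*} [NormedAddCommGroup E] [NormedSpace ℝ E]
    [NormedAddCommGroup F] [InnerProductSpace ℝ F] {g : E → F} {z : E} {c : ℝ}
    (hg : DifferentiableAt ℝ g z) (hnorm : ∀ᶠ x in 𝓝 z, ‖g x‖ = c) (a : E) :
    inner ℝ (fderiv ℝ g z a) (g z) = 0 := by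
  have hconst : HasFDerivAt (‖g ·‖ ^ 2) (0 : E →L[ℝ] ℝ) z :=
    (hasFDerivAt_const (c ^ 2) z).congr_of_eventuallyEq (hnorm.mono fun x hx => by simp [hx])
  have h := congrArg (· a) (hg.hasFDerivAt.norm_sq.unique hconst)
  simp only [smul_apply, ContinuousLinearMap.comp_apply, innerSL_apply_apply,
    zero_apply, smul_eq_zero, two_ne_zero, false_or] at h
  rw [real_inner_comm, h]

lemma fderiv_gradient_apply_gradient_eq_zero {E : Type*} [NormedAddCommGroup E]
    [InnerProductSpace ℝ E] [CompleteSpace E] {ρ : E → ℝ} {z : E} {c : ℝ}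
    (hρ : ContDiffAt ℝ 2 ρ z) (hnorm : ∀ᶠ x in 𝓝 z, ‖gradient ρ x‖ = c) :
    fderiv ℝ (gradient ρ) z (gradient ρ z) = 0 :=
  ext_inner_right ℝ fun a => by
    rw [inner_zero_left, ← ContinuousLinearMap.coe_coe, hρ.isSymmetric_fderiv_gradient,
      ContinuousLinearMap.coe_coe, real_inner_comm]
    exact inner_fderiv_apply_self_eq_zero hρ.differentiableAt_gradient hnorm a

section FlowLine

variable {E : Type*} [NormedAddCommGroup E] [NormedSpace ℝ E] {g : E → E} {U : Set E}

lemma apply_add_smul_self_eq_of_fderiv_self_eq_zero_of_nonneg (hU : IsOpen U)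
    (hg : ContDiffOn ℝ 1 g U)
    (hgg : ∀ z ∈ U, fderiv ℝ g z (g z) = 0) {z₀ : E} {t : ℝ} (ht : 0 ≤ t)
    (hseg : ∀ s ∈ Icc 0 t, z₀ + s • g z₀ ∈ U) :
    g (z₀ + t • g z₀) = g z₀ := by
  set v := g z₀
  set γ : ℝ → E := fun s => z₀ + s • v
  have hγ : ∀ s, HasDerivAt γ v s := fun s => by
    simpa only [one_smul] using ((hasDerivAt_id' s).smul_const v).const_add z₀
  have hg' : ∀ s ∈ Icc 0 t, HasFDerivAt g (fderiv ℝ g (γ s)) (γ s) := fun s hs =>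
    ((hg.differentiableOn one_ne_zero).differentiableAt (hU.mem_nhds (hseg s hs))).hasFDerivAt
  obtain ⟨C, hC⟩ : ∃ C, ∀ s ∈ Icc 0 t, ‖fderiv ℝ g (γ s)‖ ≤ C :=
    isCompact_Icc.exists_bound_of_continuousOn <|
      (hg.continuousOn_fderiv_of_isOpen hU le_rfl).comp (by fun_prop) hseg
  let f : ℝ → E := fun s => g (γ s) - v
  have hf : ∀ s ∈ Icc 0 t, HasDerivAt f (fderiv ℝ g (γ s) v) s := fun s hs =>
    ((hg' s hs).comp_hasDerivAt s (hγ s)).sub_const v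
  have hf_eq : ∀ s ∈ Icc 0 t, fderiv ℝ g (γ s) v = -fderiv ℝ g (γ s) (f s) := fun s hs => by
    rw [map_sub, hgg _ (hseg s hs), zero_sub, neg_neg]
  have hf_zero := eq_zero_of_abs_deriv_le_mul_abs_self_of_eq_zero_right (K := C)
    (fun s hs => (hf s hs).continuousAt.continuousWithinAt)
    (fun s hs => (hf s (Ico_subset_Icc_self hs)).hasDerivWithinAt)
    (by simp [f, γ, v]) (fun s hs => by
      have hs := Ico_subset_Icc_self hs
      rw [hf_eq s hs, norm_neg]
      exact (fderiv ℝ g (γ s)).le_of_opNorm_le (hC s hs) (f s))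
    t ⟨ht, le_rfl⟩
  exact sub_eq_zero.mp hf_zero

lemma apply_add_smul_self_eq_of_fderiv_self_eq_zero (hU : IsOpen U) (hg : ContDiffOn ℝ 1 g U)
    (hgg : ∀ z ∈ U, fderiv ℝ g z (g z) = 0) {z₀ : E} {t : ℝ}
    (hseg : ∀ s ∈ uIcc 0 t, z₀ + s • g z₀ ∈ U) :
    g (z₀ + t • g z₀) = g z₀ := by
  rcases le_total 0 t with ht | ht
  · exact apply_add_smul_self_eq_of_fderiv_self_eq_zero_of_nonneg hU hg hgg ht fun s hs =>
      hseg s (by rwa [uIcc_of_le ht])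
  · have hg_neg : ∀ z ∈ U, fderiv ℝ (-g) z ((-g) z) = 0 := fun z hz => by
      rw [fderiv_neg]
      simp only [Pi.neg_apply, neg_apply, map_neg, hgg z hz, neg_zero]
    have := apply_add_smul_self_eq_of_fderiv_self_eq_zero_of_nonneg (g := -g) hU hg.neg hg_neg
      (neg_nonneg.2 ht) fun s hs => by
        simpa using hseg (-s) (by rw [uIcc_of_ge ht]; constructor <;> linarith [hs.1, hs.2])
    simpa using this

end FlowLine

theorem complex_tangent_space_constant_along_normal_general {n : ℕ}
    {U : Set (EuclideanSpace ℂ (Fin n))} (hU : IsOpen U)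
    (ρ : EuclideanSpace ℂ (Fin n) → ℝ) (hρ : ContDiffOn ℝ 2 ρ U)
    (hgrad : ∀ z ∈ U, ‖gradient ρ z‖ = 1)
    (z₀ : EuclideanSpace ℂ (Fin n))
    (w : EuclideanSpace ℂ (Fin n))
    (hw : (inner ℂ w (gradient ρ z₀) : ℂ).re = 0)
    (hiw : (inner ℂ ((Complex.I : ℂ) • w) (gradient ρ z₀) : ℂ).re = 0)
    (t : ℝ) (hseg : ∀ s ∈ Set.uIcc (0 : ℝ) t, z₀ + s • gradient ρ z₀ ∈ U) :
    (inner ℂ w (gradient ρ (z₀ + t • gradient ρ z₀)) : ℂ).re = 0 ∧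
    (inner ℂ ((Complex.I : ℂ) • w) (gradient ρ (z₀ + t • gradient ρ z₀)) : ℂ).re = 0 := by
  have hHess : ∀ z ∈ U, fderiv ℝ (gradient ρ) z (gradient ρ z) = 0 := fun z hz =>
    fderiv_gradient_apply_gradient_eq_zero (hρ.contDiffAt (hU.mem_nhds hz))
      (eventually_of_mem (hU.mem_nhds hz) hgrad)
  have hnormal : gradient ρ (z₀ + t • gradient ρ z₀) = gradient ρ z₀ :=
    apply_add_smul_self_eq_of_fderiv_self_eq_zero hU (hρ.gradient_of_isOpen (n := 1) hU) hHess
      hseg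
  rw [hnormal]
  exact ⟨hw, hiw⟩

theorem complex_tangent_space_constant_along_normal {n : ℕ}
    {U : Set (EuclideanSpace ℂ (Fin n))} (hU : IsOpen U)
    (ρ : EuclideanSpace ℂ (Fin n) → ℝ) (hρ : ContDiffOn ℝ 2 ρ U)
    (hgrad : ∀ z ∈ U, ‖gradient ρ z‖ = 1)
    (z₀ : EuclideanSpace ℂ (Fin n)) (hz₀ : z₀ ∈ U)
    (w : EuclideanSpace ℂ (Fin n))
    (hw : (inner ℂ w (gradient ρ z₀) : ℂ).re = 0)
    (hiw : (inner ℂ ((Complex.I : ℂ) • w) (gradient ρ z₀) : ℂ).re = 0)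
    (t : ℝ) (hseg : ∀ s ∈ Set.uIcc (0 : ℝ) t, z₀ + s • gradient ρ z₀ ∈ U) :
    (inner ℂ w (gradient ρ (z₀ + t • gradient ρ z₀)) : ℂ).re = 0 ∧
    (inner ℂ ((Complex.I : ℂ) • w) (gradient ρ (z₀ + t • gradient ρ z₀)) : ℂ).re = 0 :=
  complex_tangent_space_constant_along_normal_general hU ρ hρ hgrad z₀ w hw hiw t hseg
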